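/- arXiv:2212.14239 — 2 statements merged into one kernel-verified Lean document; each statement's English description precedes it below -/
import Mathlib

section
/- Let f, g be in B(X,P). Then there exists h in B(X,P) with f = gh (i.e. f(x) = h(g(x)) for all x in X) if and only if the kernel of g is contained in the kernel of f, i.e. for all x, y in X, g(x) = g(y) implies f(x) = f(y). -/
open Cardinal

/-- `P : I → Set X` is a partition of `X`: blocks are nonempty, pairwise disjoint,
and cover `X`. -/
def IsPartition {X I : Type*} (P : I → Set X) : Prop :=
  (∀ i, (P i).Nonempty) ∧ Pairwise (Function.onFun Disjoint P) ∧ ∀ x, ∃ i, x ∈ P i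

/-- `f` belongs to `B(X,P)` with character `χ`: `f` maps each block `P i` into the
block `P (χ i)`, and `χ` is a bijection of the index set. -/
def MemB {X I : Type*} (P : I → Set X) (f : X → X) (χ : I → I) : Prop :=
  (∀ i, Set.MapsTo f (P i) (P (χ i))) ∧ Function.Bijective χ

/-
If `ker g ⊆ ker f`, then `f` factors through `g` as a map `g(X) → X`, and any extension of it
to all of `X` is a right factor `h` with `f = h ∘ g`. Such an extension can be chosen to preserve
the partition with character `χf ∘ χg⁻¹`: on `g(X)` this is forced by `f` and `g`, and outside
`g(X)` each point may be sent to an arbitrary point of the required block.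
-/

namespace IsPartition

variable {X I : Type*} {P : I → Set X}

theorem eq_of_mem (hP : IsPartition P) {x : X} {i j : I} (hi : x ∈ P i) (hj : x ∈ P j) :
    i = j := by
  by_contra hne
  exact (hP.2.1 hne).le_bot ⟨hi, hj⟩

theorem exists_mapsTo (hP : IsPartition P) (χ : I → I) :
    ∃ d : X → X, ∀ i, Set.MapsTo d (P i) (P (χ i)) := by
  choose idx h_idx using hP.2.2
  refine ⟨fun x => (hP.1 (χ (idx x))).some, fun i x hx => ?_⟩
  rw [← hP.eq_of_mem (h_idx x) hx]
  exact (hP.1 _).some_mem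

theorem mapsTo_extend (hP : IsPartition P) {f g d : X → X} {χf χg χ : I → I}
    (hf : ∀ i, Set.MapsTo f (P i) (P (χf i))) (hg : ∀ i, Set.MapsTo g (P i) (P (χg i)))
    (hd : ∀ i, Set.MapsTo d (P i) (P (χ i))) (hfg : f.FactorsThrough g)
    (hχ : ∀ i, χ (χg i) = χf i) (j : I) :
    Set.MapsTo (Function.extend g f d) (P j) (P (χ j)) := by
  intro y hy
  by_cases h_range : ∃ x, g x = y
  · obtain ⟨x, rfl⟩ := h_range
    obtain ⟨i, hi⟩ := hP.2.2 x
    rw [hfg.extend_apply, ← hP.eq_of_mem (hg i hi) hy, hχ]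
    exact hf i hi
  · rw [Function.extend_apply' _ _ _ h_range]
    exact hd j hy

end IsPartition

theorem R_le_iff_general {X I : Type*} (P : I → Set X) (hP : IsPartition P)
    (f g : X → X) (χf χg : I → I) (hf : MemB P f χf) (hg : MemB P g χg) :
    (∃ h χh, MemB P h χh ∧ ∀ x, f x = h (g x)) ↔
      ∀ x y : X, g x = g y → f x = f y := by
  constructor
  · rintro ⟨h, -, -, hfh⟩ x y hxy
    rw [hfh x, hfh y, hxy]
  · intro hker
    set χg' := Equiv.ofBijective χg hg.2
    obtain ⟨d, hd⟩ := hP.exists_mapsTo (χf ∘ χg'.symm)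
    have hχ : ∀ i, (χf ∘ χg'.symm) (χg i) = χf i := fun i =>
      congrArg χf (χg'.symm_apply_apply i)
    refine ⟨Function.extend g f d, χf ∘ χg'.symm,
      ⟨hP.mapsTo_extend hf.1 hg.1 hd hker hχ, hf.2.comp χg'.symm.bijective⟩,
      fun x => (Function.FactorsThrough.extend_apply hker d x).symm⟩

/-- `R_f ≤ R_g` in `B(X,P)` iff `ker g ⊆ ker f`. -/
theorem R_le_iff {X I : Type*} [Nonempty X] (P : I → Set X) (hP : IsPartition P)
    (f g : X → X) (χf χg : I → I) (hf : MemB P f χf) (hg : MemB P g χg) :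
    (∃ h χh, MemB P h χh ∧ ∀ x, f x = h (g x)) ↔
      ∀ x y : X, g x = g y → f x = f y :=
  R_le_iff_general P hP f g χf χg hf hg
end

section
/- Let f, g be in B(X,P). Then f D g in B(X,P) if and only if for every cardinal lambda, the cardinality of {i in I : |f(X_i)| = lambda} equals the cardinality of {i in I : |g(X_i)| = lambda}. -/
open Cardinal

/-- Green's `L` relation on `B(X,P)` (left-to-right composition: `f = hg` means
`f x = g (h x)`). -/
def GreenL {X I : Type*} (P : I → Set X) (f g : X → X) : Prop :=
  ∃ h χh h' χh', MemB P h χh ∧ MemB P h' χh' ∧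
    (∀ x, f x = g (h x)) ∧ (∀ x, g x = f (h' x))

/-- Green's `R` relation on `B(X,P)` (`f = gh` means `f x = h (g x)`). -/
def GreenR {X I : Type*} (P : I → Set X) (f g : X → X) : Prop :=
  ∃ h χh h' χh', MemB P h χh ∧ MemB P h' χh' ∧
    (∀ x, f x = h (g x)) ∧ (∀ x, g x = h' (f x))

/-- Green's `D` relation on `B(X,P)`. -/
def GreenD {X I : Type*} (P : I → Set X) (f g : X → X) : Prop :=
  ∃ k χk, MemB P k χk ∧ GreenL P f k ∧ GreenR P k g

/-- Green's `J` relation on `B(X,P)` (`f = h₁ g h₂` means `f x = h₂ (g (h₁ x))`). -/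
def GreenJ {X I : Type*} (P : I → Set X) (f g : X → X) : Prop :=
  (∃ h1 χ1 h2 χ2, MemB P h1 χ1 ∧ MemB P h2 χ2 ∧ ∀ x, f x = h2 (g (h1 x))) ∧
  (∃ h3 χ3 h4 χ4, MemB P h3 χ3 ∧ MemB P h4 χ4 ∧ ∀ x, g x = h4 (f (h3 x)))

/-!
A step `f L k` only permutes the block images, `f '' P (σ i) = k '' P i`, while a step `k R g`
only renames values (`k` and `g` have the same kernel), which keeps each `#(k '' P i)`. So `f D g`
gives a permutation `σ` with `#(f '' P (σ i)) = #(g '' P i)`, i.e. equal counts. Conversely, given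
such a `σ`, follow `g` on each block `P i` by a bijection `g '' P i → f '' P (σ i)`: the result
`k` has the kernel of `g` and the block images of `f`, so `f L k R g`.
-/

section

open Set Function

variable {X I : Type*} {P : I → Set X} {f g k : X → X} {χf χg : I → I}

lemma IsPartition.eq_of_mem_of_mem (hP : IsPartition P) {x : X} {i j : I}
    (hi : x ∈ P i) (hj : x ∈ P j) : i = j := by
  by_contra h
  exact disjoint_left.mp (hP.2.1 h) hi hj

namespace MemB

lemma eq_of_apply_eq (hP : IsPartition P) (hf : MemB P f χf) {x y : X} {i j : I}
    (hx : x ∈ P i) (hy : y ∈ P j) (hxy : f x = f y) : i = j :=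
  hf.2.1 (hP.eq_of_mem_of_mem (hf.1 i hx) (hxy ▸ hf.1 j hy))

lemma eq_of_image_subset (hP : IsPartition P) (hf : MemB P f χf) {i j : I}
    (h : f '' P i ⊆ f '' P j) : i = j := by
  obtain ⟨x, hx⟩ := hP.1 i
  obtain ⟨y, hy, hyx⟩ := h (mem_image_of_mem f hx)
  exact hf.eq_of_apply_eq hP hx hy hyx.symm

lemma image_subset_image_of_eq_comp {h : X → X} {χ : I → I} (hh : MemB P h χ)
    (hfk : ∀ x, f x = k (h x)) (i : I) : f '' P i ⊆ k '' P (χ i) := by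
  rintro _ ⟨x, hx, rfl⟩
  exact ⟨h x, hh.1 i hx, (hfk x).symm⟩

end MemB

lemma GreenL.exists_equiv_image_eq (hP : IsPartition P) (hf : MemB P f χf)
    (hL : GreenL P f k) : ∃ σ : I ≃ I, ∀ i, f '' P (σ i) = k '' P i := by
  obtain ⟨h, χh, h', χh', hh, hh', hfk, hkf⟩ := hL
  have hfk_sub := hh.image_subset_image_of_eq_comp hfk
  have hkf_sub := hh'.image_subset_image_of_eq_comp hkf
  have hret : ∀ i, χh' (χh i) = i := fun i =>
    (hf.eq_of_image_subset hP ((hfk_sub i).trans (hkf_sub _))).symm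
  have himage : ∀ i, f '' P i = k '' P (χh i) := fun i =>
    (hfk_sub i).antisymm (by simpa only [hret] using hkf_sub (χh i))
  set e := Equiv.ofBijective χh hh.2
  refine ⟨e.symm, fun i => ?_⟩
  simpa only [e, Equiv.ofBijective_apply_symm_apply] using himage (e.symm i)

lemma exists_memB_eq_comp_of_image_subset (hP : IsPartition P) {τ : I → I}
    (hτ : Bijective τ) (himage : ∀ i, f '' P i ⊆ k '' P (τ i)) :
    ∃ h χ, MemB P h χ ∧ ∀ x, f x = k (h x) := by
  have : ∀ x, ∃ y, (∀ i, x ∈ P i → y ∈ P (τ i)) ∧ k y = f x := by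
    intro x
    obtain ⟨i, hi⟩ := hP.2.2 x
    obtain ⟨y, hy, hyx⟩ := himage i (mem_image_of_mem f hi)
    exact ⟨y, fun j hj => hP.eq_of_mem_of_mem hi hj ▸ hy, hyx⟩
  choose h hmaps hh using this
  exact ⟨h, τ, ⟨fun i x hx => hmaps x i hx, hτ⟩, fun x => (hh x).symm⟩

lemma greenL_of_image_eq (hP : IsPartition P) (σ : I ≃ I)
    (himage : ∀ i, f '' P (σ i) = k '' P i) : GreenL P f k := by
  obtain ⟨h, χ, hh, hfk⟩ :=
    exists_memB_eq_comp_of_image_subset hP σ.symm.bijective fun i => by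
      simpa only [σ.apply_symm_apply] using (himage (σ.symm i)).subset
  obtain ⟨h', χ', hh', hkf⟩ :=
    exists_memB_eq_comp_of_image_subset hP σ.bijective fun i => (himage i).symm.subset
  exact ⟨h, χ, h', χ', hh, hh', hfk, hkf⟩

lemma GreenR.mk_image_eq (hR : GreenR P f g) (i : I) : #(f '' P i) = #(g '' P i) := by
  obtain ⟨h, -, h', -, -, -, hfg, hgf⟩ := hR
  refine le_antisymm ?_ ?_
  · rw [show f = h ∘ g from funext hfg, image_comp]
    exact mk_image_le
  · rw [show g = h' ∘ f from funext hgf, image_comp]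
    exact mk_image_le

lemma exists_memB_eq_comp_of_factorsThrough (hP : IsPartition P) (hf : MemB P f χf)
    (hg : MemB P g χg) (hfg : f.FactorsThrough g) :
    ∃ h χ, MemB P h χ ∧ ∀ x, f x = h (g x) := by
  set τ := χf ∘ (Equiv.ofBijective χg hg.2).symm
  have : ∀ y, ∃ z, (∀ j, y ∈ P j → z ∈ P (τ j)) ∧ ∀ x, g x = y → f x = z := by
    intro y
    by_cases hy : y ∈ range g
    · obtain ⟨x, rfl⟩ := hy
      obtain ⟨i, hi⟩ := hP.2.2 x
      refine ⟨f x, fun j hj => ?_, fun x' hx' => hfg hx'⟩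
      obtain rfl : χg i = j := hP.eq_of_mem_of_mem (hg.1 i hi) hj
      simpa only [τ, comp_apply, Equiv.ofBijective_symm_apply_apply] using hf.1 i hi
    · obtain ⟨i, hi⟩ := hP.2.2 y
      obtain ⟨z, hz⟩ := hP.1 (τ i)
      exact ⟨z, fun j hj => hP.eq_of_mem_of_mem hi hj ▸ hz, fun x hx => absurd ⟨x, hx⟩ hy⟩
  choose h hmaps hh using this
  exact ⟨h, τ, ⟨fun j y hy => hmaps y j hy, hf.2.comp (Equiv.bijective _)⟩,
    fun x => hh _ x rfl⟩

lemma greenR_of_factorsThrough (hP : IsPartition P) (hf : MemB P f χf) (hg : MemB P g χg)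
    (hfg : f.FactorsThrough g) (hgf : g.FactorsThrough f) : GreenR P f g := by
  obtain ⟨h, χ, hh, hfh⟩ := exists_memB_eq_comp_of_factorsThrough hP hf hg hfg
  obtain ⟨h', χ', hh', hgh⟩ := exists_memB_eq_comp_of_factorsThrough hP hg hf hgf
  exact ⟨h, χ, h', χ', hh, hh', hfh, hgh⟩

lemma exists_bijOn_of_mk_eq {α : Type*} {s t : Set α} (h : #s = #t) :
    ∃ φ : α → α, BijOn φ s t := by
  classical
  obtain ⟨e⟩ := Cardinal.eq.1 h
  refine ⟨fun x => if hx : x ∈ s then e ⟨x, hx⟩ else x, fun x hx => by simp [hx], ?_, ?_⟩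
  · intro x hx y hy hxy
    simp only [dif_pos hx, dif_pos hy] at hxy
    exact congrArg Subtype.val (e.injective (Subtype.ext hxy))
  · intro y hy
    exact ⟨e.symm ⟨y, hy⟩, (e.symm ⟨y, hy⟩).2, by simp⟩

lemma exists_memB_image_eq_of_mk_eq (hP : IsPartition P) (hf : MemB P f χf)
    (hg : MemB P g χg) (σ : I ≃ I) (hσ : ∀ i, #(f '' P (σ i)) = #(g '' P i)) :
    ∃ k χk, MemB P k χk ∧ (∀ i, f '' P (σ i) = k '' P i) ∧
      k.FactorsThrough g ∧ g.FactorsThrough k := by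
  choose φ hφ using fun i => exists_bijOn_of_mk_eq (hσ i).symm
  have : ∀ x, ∃ z, ∀ i, x ∈ P i → z = φ i (g x) := by
    intro x
    obtain ⟨i, hi⟩ := hP.2.2 x
    exact ⟨φ i (g x), fun j hj => by rw [hP.eq_of_mem_of_mem hi hj]⟩
  choose k hk using this
  have himage : ∀ i, f '' P (σ i) = k '' P i := fun i => by
    rw [← (hφ i).image_eq, image_image]
    exact image_congr fun x hx => (hk x i hx).symm
  have hkB : MemB P k (χf ∘ σ) :=
    ⟨fun i => mapsTo_iff_image_subset.2 (himage i ▸ (hf.1 (σ i)).image_subset),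
      hf.2.comp σ.bijective⟩
  refine ⟨k, _, hkB, himage, fun x y hxy => ?_, fun x y hxy => ?_⟩ <;>
    obtain ⟨i, hx⟩ := hP.2.2 x <;> obtain ⟨j, hy⟩ := hP.2.2 y
  · obtain rfl := hg.eq_of_apply_eq hP hx hy hxy
    rw [hk x i hx, hk y i hy, hxy]
  · obtain rfl := hkB.eq_of_apply_eq hP hx hy hxy
    rw [hk x i hx, hk y i hy] at hxy
    exact (hφ i).injOn (mem_image_of_mem g hx) (mem_image_of_mem g hy) hxy

lemma exists_equiv_comp_eq_iff_mk_fiber_eq {α : Type*} (a b : I → α) :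
    (∃ σ : I ≃ I, ∀ i, a (σ i) = b i) ↔ ∀ c, #{i | a i = c} = #{i | b i = c} := by
  constructor
  · rintro ⟨σ, hσ⟩ c
    exact (mk_congr (σ.subtypeEquiv fun i => show b i = c ↔ a (σ i) = c by rw [hσ i])).symm
  · intro h
    let e c : {i // b i = c} ≃ {i // a i = c} := (Cardinal.eq.1 (h c).symm).some
    exact ⟨Equiv.ofFiberEquiv e, Equiv.ofFiberEquiv_map e⟩

end

theorem D_iff_counts_general {X I : Type*} (P : I → Set X) (hP : IsPartition P)
    (f g : X → X) (χf χg : I → I) (hf : MemB P f χf) (hg : MemB P g χg) :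
    GreenD P f g ↔
      ∀ lam : Cardinal,
        Cardinal.mk ↥{i : I | Cardinal.mk ↥(f '' (P i)) = lam} =
          Cardinal.mk ↥{i : I | Cardinal.mk ↥(g '' (P i)) = lam} := by
  refine Iff.trans ?_ <|
    exists_equiv_comp_eq_iff_mk_fiber_eq (fun i => #(f '' P i)) fun i => #(g '' P i)
  constructor
  · rintro ⟨k, χk, -, hL, hR⟩
    obtain ⟨σ, hσ⟩ := hL.exists_equiv_image_eq hP hf
    exact ⟨σ, fun i => by rw [hσ i]; exact hR.mk_image_eq i⟩
  · rintro ⟨σ, hσ⟩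
    obtain ⟨k, χk, hk, himage, hkg, hgk⟩ := exists_memB_image_eq_of_mk_eq hP hf hg σ hσ
    exact ⟨k, χk, hk, greenL_of_image_eq hP σ himage,
      greenR_of_factorsThrough hP hk hg hkg hgk⟩

/-- `f D g` in `B(X,P)` iff for every cardinal `λ` the number of indices `i`
with `|f '' (P i)| = λ` equals the number of indices `i` with `|g '' (P i)| = λ`. -/
theorem D_iff_counts {X I : Type*} [Nonempty X] (P : I → Set X) (hP : IsPartition P)
    (f g : X → X) (χf χg : I → I) (hf : MemB P f χf) (hg : MemB P g χg) :
    GreenD P f g ↔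
      ∀ lam : Cardinal,
        Cardinal.mk ↥{i : I | Cardinal.mk ↥(f '' (P i)) = lam} =
          Cardinal.mk ↥{i : I | Cardinal.mk ↥(g '' (P i)) = lam} :=
  D_iff_counts_general P hP f g χf χg hf hg
end
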